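/- arXiv:1808.01245 — 2 statements merged into one kernel-verified Lean document; each statement's English description precedes it below -/
import Mathlib

section
/- The 1-form φ(z) = K(z,z)^{1/(n+1)} dzₙ, restricted to C̃₀, is γ₀-invariant: for every z ∈ C̃₀, K(γ₀z, γ₀z)^{1/(n+1)} multiplied by the derivative of the n-th coordinate of γ₀z with respect to the real parameter xₙ = zₙ equals K(z,z)^{1/(n+1)}. -/
open scoped BigOperators
open Complex MeasureTheory Filter Topology Matrix

namespace BallPaper

noncomputable section

variable {n : ℕ}

/-- The unit ball in ℂⁿ. -/
def ball (n : ℕ) : Set (Fin n → ℂ) := {z | ∑ i, ‖z i‖ ^ 2 < 1}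

/-- ⟨z,w⟩ = z₁ conj w₁ + ... + zₙ conj wₙ − 1. -/
def pair (z w : Fin n → ℂ) : ℂ := ∑ i, z i * star (w i) - 1

/-- The Hermitian form of signature (n,1) on ℂ^{n+1}:
⟨⟨u,v⟩⟩ = u₁ conj v₁ + ... + uₙ conj vₙ − u_{n+1} conj v_{n+1}. -/
def herm (u v : Fin (n + 1) → ℂ) : ℂ :=
  ∑ i : Fin n, u i.castSucc * star (v i.castSucc) - u (Fin.last n) * star (v (Fin.last n))

/-- SU(n,1): determinant-one matrices preserving the (n,1) Hermitian form. -/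
def SU (n : ℕ) : Set (Matrix (Fin (n + 1)) (Fin (n + 1)) ℂ) :=
  {A | A.det = 1 ∧ ∀ u v, herm (A.mulVec u) (A.mulVec v) = herm u v}

/-- The denominator a_{n+1,1} z₁ + ... + a_{n+1,n} zₙ + a_{n+1,n+1} of the
fractional-linear action. -/
def denom (A : Matrix (Fin (n + 1)) (Fin (n + 1)) ℂ) (z : Fin n → ℂ) : ℂ :=
  ∑ j : Fin n, A (Fin.last n) j.castSucc * z j + A (Fin.last n) (Fin.last n)

/-- The fractional-linear action of a matrix on ℂⁿ (defined on the ball). -/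
def act (A : Matrix (Fin (n + 1)) (Fin (n + 1)) ℂ) (z : Fin n → ℂ) : Fin n → ℂ :=
  fun j => (∑ l : Fin n, A j.castSucc l.castSucc * z l + A j.castSucc (Fin.last n)) / denom A z

/-- The complex Jacobian J(A,z) = (denominator)^{-(n+1)}. -/
def jac (A : Matrix (Fin (n + 1)) (Fin (n + 1)) ℂ) (z : Fin n → ℂ) : ℂ :=
  (denom A z)⁻¹ ^ (n + 1)

/-- The Bergman kernel K(z,w) = (n!/πⁿ) (−⟨z,w⟩)^{−(n+1)}. -/
def Kc (z w : Fin n → ℂ) : ℂ :=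
  (((Nat.factorial n : ℝ) / Real.pi ^ n : ℝ) : ℂ) * (-(pair z w))⁻¹ ^ (n + 1)

/-- K(z,z) as a real-valued function: K(z,z) = (n!/πⁿ) (1−|z|²)^{−(n+1)}. -/
def Kr (z : Fin n → ℂ) : ℝ :=
  (Nat.factorial n : ℝ) / Real.pi ^ n * ((1 - ∑ i, ‖z i‖ ^ 2)⁻¹) ^ (n + 1)

/-- c(𝔹ⁿ,k) = C((n+1)(k−1)+n, n). -/
def cB (n k : ℕ) : ℕ := Nat.choose ((n + 1) * (k - 1) + n) n

/-- The last index of Fin n. -/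
def lastI (n : ℕ) (hn : 0 < n) : Fin n := ⟨n - 1, by omega⟩

/-- The geodesic C̃₀ = {z ∈ 𝔹ⁿ : z₁ = ... = z_{n−1} = 0, zₙ ∈ (−1,1) real}. -/
def geo0 (n : ℕ) (hn : 0 < n) : Set (Fin n → ℂ) :=
  {z | (∀ i : Fin n, (i : ℕ) < n - 1 → z i = 0) ∧ (z (lastI n hn)).im = 0 ∧
    -1 < (z (lastI n hn)).re ∧ (z (lastI n hn)).re < 1}

/-- The point (0,...,0,x) of C̃₀. -/
def curve (n : ℕ) (hn : 0 < n) (x : ℝ) : Fin n → ℂ :=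
  fun i => if i = lastI n hn then (x : ℂ) else 0

/-- The vector (X,1) ∈ ℂ^{n+1}. -/
def snoc1 (X : Fin n → ℂ) : Fin (n + 1) → ℂ := Fin.snoc X 1

/-- The matrix A_γ, with columns v₁,...,v_{n−1},
⟨X,Y⟩⁻¹(X,1) + (1/2)(Y,1), ⟨X,Y⟩⁻¹(X,1) − (1/2)(Y,1). -/
def Amat (n : ℕ) (v : Fin (n - 1) → Fin (n + 1) → ℂ) (X Y : Fin n → ℂ) :
    Matrix (Fin (n + 1)) (Fin (n + 1)) ℂ :=
  Matrix.of fun i j =>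
    if h : (j : ℕ) < n - 1 then v ⟨j, h⟩ i
    else if (j : ℕ) = n - 1 then ((pair X Y)⁻¹ • snoc1 X + (2 : ℂ)⁻¹ • snoc1 Y) i
    else ((pair X Y)⁻¹ • snoc1 X - (2 : ℂ)⁻¹ • snoc1 Y) i

/-- σ = diag(1,...,1,−1). -/
def sigmaM (n : ℕ) : Matrix (Fin (n + 1)) (Fin (n + 1)) ℂ :=
  Matrix.diagonal fun i => if i = Fin.last n then -1 else 1

/-- Inverse hyperbolic cosine. -/
def arcosh (x : ℝ) : ℝ := Real.log (x + Real.sqrt (x ^ 2 - 1))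

/-- Inverse hyperbolic tangent. -/
def artanh (x : ℝ) : ℝ := Real.log ((1 + x) / (1 - x)) / 2

/-- The hyperbolic (Bergman) distance on the ball, determined by
cosh²(ρ(z,w)/2) = ⟨z,w⟩⟨w,z⟩/(⟨z,z⟩⟨w,w⟩). -/
def rho (z w : Fin n → ℂ) : ℝ :=
  2 * arcosh (Real.sqrt ((pair z w * pair w z).re / (pair z z * pair w w).re))

/-- A discrete subgroup Γ of SU(n,1) acting freely on the ball with compact quotient. -/
structure DiscreteGroup (n : ℕ) where
  Γ : Set (Matrix (Fin (n + 1)) (Fin (n + 1)) ℂ)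
  sub_SU : Γ ⊆ SU n
  one_mem : 1 ∈ Γ
  mul_mem : ∀ {A B}, A ∈ Γ → B ∈ Γ → A * B ∈ Γ
  inv_mem : ∀ {A}, A ∈ Γ → A⁻¹ ∈ Γ
  discrete : DiscreteTopology ↥Γ
  free : ∀ A ∈ Γ, (∃ z ∈ ball n, act A z = z) → A = 1
  cocompact : ∃ F : Set (Fin n → ℂ), F ⊆ ball n ∧ IsCompact F ∧
    ∀ z ∈ ball n, ∃ A ∈ Γ, act A z ∈ F

/-- A hyperbolic element γ of Γ, with real eigenvalues, real fixed points X, Y on the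
boundary, eigenvalue data λ, and the eigenvectors v₁,...,v_{n−1} for eigenvalues ±1,
orthonormal with respect to the form ⟨⟨.,.⟩⟩. -/
structure HypElt (n : ℕ) (G : DiscreteGroup n) where
  γ : Matrix (Fin (n + 1)) (Fin (n + 1)) ℂ
  mem : γ ∈ G.Γ
  ne_one : γ ≠ 1
  eig_real : ∀ μ ∈ spectrum ℂ γ, μ.im = 0
  X : Fin n → ℂ
  Y : Fin n → ℂ
  X_bd : ∑ i, ‖X i‖ ^ 2 = 1
  Y_bd : ∑ i, ‖Y i‖ ^ 2 = 1
  X_real : ∀ i, (X i).im = 0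
  Y_real : ∀ i, (Y i).im = 0
  lam : ℝ
  lam_sq : 1 < lam ^ 2
  eigX : γ.mulVec (snoc1 X) = (lam : ℂ) • snoc1 X
  eigY : γ.mulVec (snoc1 Y) = ((lam : ℂ))⁻¹ • snoc1 Y
  primitive : ∀ A ∈ G.Γ, ∀ m : ℕ, 2 ≤ m → A ^ m ≠ γ
  v : Fin (n - 1) → Fin (n + 1) → ℂ
  alph : Fin (n - 1) → ℂ
  alph_pm : ∀ j, alph j = 1 ∨ alph j = -1
  v_eig : ∀ j, γ.mulVec (v j) = alph j • v j
  v_on : ∀ j l, herm (v j) (v l) = if j = l then 1 else 0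

variable {G : DiscreteGroup n}

/-- The matrix A_γ associated to the hyperbolic element γ. -/
def HypElt.A (H : HypElt n G) : Matrix (Fin (n + 1)) (Fin (n + 1)) ℂ :=
  Amat n H.v H.X H.Y

/-- γ₀ = A_γ⁻¹ γ A_γ. -/
def HypElt.g0 (H : HypElt n G) : Matrix (Fin (n + 1)) (Fin (n + 1)) ℂ :=
  (H.A)⁻¹ * H.γ * H.A

/-- T = (λ²−1)/(λ²+1), the last coordinate of γ₀(0). -/
def HypElt.T (H : HypElt n G) : ℝ := (H.lam ^ 2 - 1) / (H.lam ^ 2 + 1)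

/-- The geodesic C̃ in 𝔹ⁿ with endpoints X, Y, as the image of C̃₀ under A_γ. -/
def HypElt.Ct (H : HypElt n G) (hn : 0 < n) : Set (Fin n → ℂ) :=
  act H.A '' geo0 n hn

/-- The length l(C) of the closed geodesic C, the hyperbolic distance from 0 to γ₀(0). -/
def HypElt.lenC (H : HypElt n G) : ℝ :=
  rho (0 : Fin n → ℂ) (act H.g0 (0 : Fin n → ℂ))

/-- A (measure-theoretic) fundamental domain for the action of Γ on the ball. -/
def IsFundDom (G : DiscreteGroup n) (F : Set (Fin n → ℂ)) : Prop :=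
  F ⊆ ball n ∧ MeasurableSet F ∧ (∀ z ∈ ball n, ∃ A ∈ G.Γ, act A z ∈ F) ∧
    ∀ A ∈ G.Γ, A ≠ 1 → volume {z ∈ F | act A z ∈ F} = 0

/-- The automorphy condition f(Az) J(A,z)^k = f(z). -/
def Automorphic (G : DiscreteGroup n) (k : ℕ) (f : (Fin n → ℂ) → ℂ) : Prop :=
  ∀ A ∈ G.Γ, ∀ z ∈ ball n, f (act A z) * jac A z ^ k = f z

/-- Membership in H̃⁰_Γ(k): holomorphic on the ball and automorphic of weight k. -/
def Htilde (G : DiscreteGroup n) (k : ℕ) (f : (Fin n → ℂ) → ℂ) : Prop :=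
  DifferentiableOn ℂ f (ball n) ∧ Automorphic G k f

/-- The inner product (f,g) = ∫_M f ḡ K(z,z)^{−k} dV = ∫_F f ḡ K(z,z)^{1−k} dV_e,
computed over a fundamental domain F. -/
def iprod (F : Set (Fin n → ℂ)) (k : ℕ) (f g : (Fin n → ℂ) → ℂ) : ℂ :=
  ∫ z in F, f z * star (g z) * ((Kr z ^ ((1 : ℤ) - (k : ℤ)) : ℝ) : ℂ)

/-- The Poincaré series Θ_w^{(k)}(z) = c(𝔹ⁿ,k) Σ_{A∈Γ} K(Az,w)^k J(A,z)^k. -/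
def ThetaPt (G : DiscreteGroup n) (k : ℕ) (w z : Fin n → ℂ) : ℂ :=
  (cB n k : ℂ) * ∑' A : ↥G.Γ, Kc (act (A : Matrix (Fin (n + 1)) (Fin (n + 1)) ℂ) z) w ^ k *
    jac (A : Matrix (Fin (n + 1)) (Fin (n + 1)) ℂ) z ^ k

/-- The relative Poincaré series
Θ_C^{(k)}(z) = ∫_C Θ_w^{(k)}(z) K(w,w)^{−k/2} ((A_γ⁻¹)*φ)(w), written out over one
period of C̃, parametrized by w = A_γ(0,...,0,x), x ∈ [0,T]. -/
def ThetaC (hn : 0 < n) (H : HypElt n G) (k : ℕ) (z : Fin n → ℂ) : ℂ :=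
  ∫ x in (0 : ℝ)..H.T, ThetaPt G k (act H.A (curve n hn x)) z *
    ((Kr (act H.A (curve n hn x)) ^ (-(k : ℝ) / 2) : ℝ) : ℂ) *
    ((Kr (curve n hn x) ^ (((n : ℝ) + 1))⁻¹ : ℝ) : ℂ)

/-- The set of integer powers of a matrix. -/
def zpows (g : Matrix (Fin (n + 1)) (Fin (n + 1)) ℂ) :
    Set (Matrix (Fin (n + 1)) (Fin (n + 1)) ℂ) := {h | ∃ m : ℤ, h = g ^ m}

/-- The conjugate group A_γ⁻¹ Γ A_γ. -/
def conjGrp (G : DiscreteGroup n) (H : HypElt n G) :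
    Set (Matrix (Fin (n + 1)) (Fin (n + 1)) ℂ) :=
  (fun g => (H.A)⁻¹ * g * H.A) '' G.Γ

end

end BallPaper

/-!
In the frame `A_γ` the last two columns are `⟨X,Y⟩⁻¹ (X,1) ± ½ (Y,1)`. As `(X,1)` and `(Y,1)` are
eigenvectors for `λ` and `λ⁻¹`, `γ₀` acts on the span of the last two basis vectors by
`[[a, b], [b, a]]` with `a = (λ + λ⁻¹)/2`, `b = (λ - λ⁻¹)/2`, `a² - b² = 1`. Hence on `C̃₀` it is
the boost `x ↦ (a x + b)/(b x + a)`, with derivative `(b x + a)⁻²`, and since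
`K(z,z)^{1/(n+1)} = c / (1 - x²)` there, the claim is the invariance of `dx / (1 - x²)` under
boosts. The one non-formal point is that `A_γ` is invertible: its columns are orthonormal for
`⟨⟨·,·⟩⟩` (`A_γᴴ σ A_γ = σ`), the `v_j` being orthogonal to `(X,1)` and `(Y,1)` because `γ`
preserves the form and `λ² ≠ 1`, and `⟨X,Y⟩ ≠ 0` because `X ≠ Y` are real unit vectors.
-/

namespace BallPaper

noncomputable section

variable {n : ℕ}

section Herm

lemma herm_add_left (u u' v : Fin (n + 1) → ℂ) : herm (u + u') v = herm u v + herm u' v := by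
  simp only [herm, Pi.add_apply, add_mul, Finset.sum_add_distrib]
  ring

lemma herm_add_right (u v v' : Fin (n + 1) → ℂ) : herm u (v + v') = herm u v + herm u v' := by
  simp only [herm, Pi.add_apply, star_add, mul_add, Finset.sum_add_distrib]
  ring

lemma herm_smul_left (x : ℂ) (u v : Fin (n + 1) → ℂ) : herm (x • u) v = x * herm u v := by
  simp only [herm, Pi.smul_apply, smul_eq_mul, mul_sub, Finset.mul_sum, mul_assoc]

lemma herm_smul_right (x : ℂ) (u v : Fin (n + 1) → ℂ) :
    herm u (x • v) = star x * herm u v := by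
  simp only [herm, Pi.smul_apply, smul_eq_mul, star_mul', mul_sub, Finset.mul_sum, mul_left_comm]

lemma star_herm (u v : Fin (n + 1) → ℂ) : star (herm u v) = herm v u := by
  simp only [herm, star_sub, star_sum, star_mul', star_star, mul_comm]

lemma herm_snoc1 (X Y : Fin n → ℂ) : herm (snoc1 X) (snoc1 Y) = pair X Y := by
  simp [herm, pair, snoc1]

lemma pair_self_eq_zero {Z : Fin n → ℂ} (hZ : ∑ i, ‖Z i‖ ^ 2 = 1) : pair Z Z = 0 := by
  have h : ∑ i, Z i * star (Z i) = ((∑ i, ‖Z i‖ ^ 2 : ℝ) : ℂ) := by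
    push_cast
    exact Finset.sum_congr rfl fun i _ => by
      rw [Complex.star_def, Complex.mul_conj, Complex.normSq_eq_norm_sq, Complex.ofReal_pow]
  rw [pair, h, hZ]
  simp

lemma herm_eq_zero_of_mulVec_eq_smul {B : Matrix (Fin (n + 1)) (Fin (n + 1)) ℂ}
    (hB : ∀ u v, herm (B *ᵥ u) (B *ᵥ v) = herm u v) {u v : Fin (n + 1) → ℂ} {μ ν : ℂ}
    (hu : B *ᵥ u = μ • u) (hv : B *ᵥ v = ν • v) (hμν : μ * star ν ≠ 1) : herm u v = 0 := by
  have h := hB u v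
  rw [hu, hv, herm_smul_left, herm_smul_right, ← mul_assoc] at h
  exact (mul_eq_zero.mp (by linear_combination h : (μ * star ν - 1) * herm u v = 0)).resolve_left
    (sub_ne_zero.mpr hμν)

lemma conjTranspose_mul_sigmaM_mul_apply (A : Matrix (Fin (n + 1)) (Fin (n + 1)) ℂ)
    (l j : Fin (n + 1)) : (Aᴴ * sigmaM n * A) l j = herm (A.col j) (A.col l) := by
  rw [Matrix.mul_apply]
  simp only [sigmaM, Matrix.mul_diagonal, Matrix.conjTranspose_apply, herm, Matrix.col_apply,
    Fin.sum_univ_castSucc, (Fin.castSucc_lt_last _).ne, if_false, if_true]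
  simp only [one_mul, neg_one_mul, mul_neg, sub_eq_add_neg, mul_comm]

lemma det_ne_zero_of_herm_col {A : Matrix (Fin (n + 1)) (Fin (n + 1)) ℂ}
    (hA : ∀ j l, herm (A.col j) (A.col l) = sigmaM n l j) : A.det ≠ 0 := by
  have hgram : Aᴴ * sigmaM n * A = sigmaM n := by
    ext l j
    rw [conjTranspose_mul_sigmaM_mul_apply, hA]
  have hσ : (sigmaM n).det = -1 := by
    simp [sigmaM, Matrix.det_diagonal]
  intro h0
  have h := congrArg Matrix.det hgram
  rw [Matrix.det_mul, Matrix.det_mul, Matrix.det_conjTranspose, hσ, h0] at h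
  simp at h

end Herm

section RealUnitVectors

variable {X Y : Fin n → ℂ}

lemma pair_eq_ofReal_of_im_eq_zero (hXr : ∀ i, (X i).im = 0) (hYr : ∀ i, (Y i).im = 0) :
    pair X Y = ((∑ i, (X i).re * (Y i).re - 1 : ℝ) : ℂ) := by
  push_cast
  refine congrArg (· - 1) (Finset.sum_congr rfl fun i _ => ?_)
  apply Complex.ext <;> simp [hXr i, hYr i]

lemma sum_re_mul_re_ne_one (hX : ∑ i, ‖X i‖ ^ 2 = 1) (hY : ∑ i, ‖Y i‖ ^ 2 = 1)
    (hXr : ∀ i, (X i).im = 0) (hYr : ∀ i, (Y i).im = 0) (hXY : X ≠ Y) :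
    ∑ i, (X i).re * (Y i).re ≠ 1 := by
  have hsq : ∀ {Z : Fin n → ℂ}, (∀ i, (Z i).im = 0) → ∀ i, ‖Z i‖ ^ 2 = (Z i).re ^ 2 :=
    fun hZ i => by rw [Complex.sq_norm, Complex.normSq_apply, hZ i]; ring
  intro h
  have hdist : ∑ i, ((X i).re - (Y i).re) ^ 2 = 0 := by
    simp only [sub_sq, Finset.sum_add_distrib, Finset.sum_sub_distrib, ← Finset.mul_sum,
      mul_assoc, ← hsq hXr, ← hsq hYr, hX, hY, h]
    ring
  refine hXY (funext fun i => Complex.ext ?_ (by rw [hXr i, hYr i]))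
  have := (Finset.sum_eq_zero_iff_of_nonneg fun i _ => sq_nonneg _).mp hdist i (Finset.mem_univ i)
  exact sub_eq_zero.mp (pow_eq_zero_iff two_ne_zero |>.mp this)

end RealUnitVectors

lemma mul_star_ofReal_ne_one {α : ℂ} (hα : α = 1 ∨ α = -1) {μ : ℝ} (hμ : μ ^ 2 ≠ 1) :
    α * star (μ : ℂ) ≠ 1 := by
  rw [Complex.star_def, Complex.conj_ofReal]
  intro h
  have hα2 : α ^ 2 = 1 := by rcases hα with rfl | rfl <;> norm_num
  exact hμ (by exact_mod_cast (by linear_combination (-(μ : ℂ) ^ 2) * hα2 + (α * μ + 1) * h :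
    (μ : ℂ) ^ 2 = 1))

section Action

variable (hn : 0 < n)

lemma mulVec_snoc1_apply (B : Matrix (Fin (n + 1)) (Fin (n + 1)) ℂ) (z : Fin n → ℂ)
    (i : Fin (n + 1)) : (B *ᵥ snoc1 z) i = ∑ l, B i l.castSucc * z l + B i (Fin.last n) := by
  simp [Matrix.mulVec, dotProduct, Fin.sum_univ_castSucc, snoc1]

lemma act_eq_div_mulVec_snoc1 (B : Matrix (Fin (n + 1)) (Fin (n + 1)) ℂ) (z : Fin n → ℂ)
    (j : Fin n) : act B z j = (B *ᵥ snoc1 z) j.castSucc / (B *ᵥ snoc1 z) (Fin.last n) := by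
  rw [mulVec_snoc1_apply, mulVec_snoc1_apply, act, denom]

/-- Holds also when `w = 0`, both sides then being `0`. -/
lemma act_eq_curve_of_mulVec_snoc1 {B : Matrix (Fin (n + 1)) (Fin (n + 1)) ℂ} {z : Fin n → ℂ}
    {u w : ℝ} (h : B *ᵥ snoc1 z = Fin.snoc (curve n hn u) (w : ℂ)) :
    act B z = curve n hn (u / w) := by
  funext j
  rw [act_eq_div_mulVec_snoc1, h, Fin.snoc_castSucc, Fin.snoc_last, curve, curve]
  split_ifs <;> push_cast <;> simp

lemma snoc_curve_eq_add_single (u : ℝ) (w : ℂ) :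
    (Fin.snoc (curve n hn u) w : Fin (n + 1) → ℂ) =
      Pi.single (lastI n hn).castSucc (u : ℂ) + Pi.single (Fin.last n) w := by
  funext i
  refine Fin.lastCases ?_ (fun k => ?_) i
  · simp [(Fin.castSucc_lt_last _).ne]
  · simp [curve, Pi.single_apply, (Fin.castSucc_lt_last _).ne]

lemma mulVec_snoc_curve (B : Matrix (Fin (n + 1)) (Fin (n + 1)) ℂ) (u : ℝ) (w : ℂ) :
    B *ᵥ Fin.snoc (curve n hn u) w =
      (u : ℂ) • B.col (lastI n hn).castSucc + w • B.col (Fin.last n) := by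
  rw [snoc_curve_eq_add_single, Matrix.mulVec_add, Matrix.mulVec_single, Matrix.mulVec_single,
    op_smul_eq_smul, op_smul_eq_smul]

end Action

def boost (a b x : ℝ) : ℝ := (a * x + b) / (b * x + a)

section Boost

variable {a b x : ℝ} (hab : a ^ 2 - b ^ 2 = 1)
include hab

lemma boost_denom_ne_zero (hx : x ^ 2 < 1) : b * x + a ≠ 0 := by
  intro h
  rw [show a = -(b * x) by linarith] at hab
  nlinarith [mul_le_mul_of_nonneg_left hx.le (sq_nonneg b)]

lemma hasDerivAt_boost (hx : b * x + a ≠ 0) : HasDerivAt (boost a b) ((b * x + a) ^ 2)⁻¹ x := by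
  have hnum : HasDerivAt (fun t => a * t + b) a x := by
    simpa using ((hasDerivAt_id x).const_mul a).add_const b
  have hden : HasDerivAt (fun t => b * t + a) b x := by
    simpa using ((hasDerivAt_id x).const_mul b).add_const a
  refine (hnum.div hden hx).congr_deriv ?_
  rw [show a * (b * x + a) - (a * x + b) * b = 1 by linear_combination hab, one_div]

lemma one_sub_boost_sq (hx : b * x + a ≠ 0) :
    1 - boost a b x ^ 2 = (1 - x ^ 2) / (b * x + a) ^ 2 := by
  rw [boost, div_pow, eq_div_iff (pow_ne_zero 2 hx), sub_mul, div_mul_cancel₀ _ (pow_ne_zero 2 hx)]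
  linear_combination (1 - x ^ 2) * hab

lemma inv_one_sub_boost_sq_mul (hx : b * x + a ≠ 0) :
    (1 - boost a b x ^ 2)⁻¹ * ((b * x + a) ^ 2)⁻¹ = (1 - x ^ 2)⁻¹ := by
  rw [one_sub_boost_sq hab hx, inv_div, div_mul_eq_mul_div, mul_inv_cancel₀ (pow_ne_zero 2 hx),
    one_div]

end Boost

lemma Kr_curve (hn : 0 < n) (x : ℝ) :
    Kr (curve n hn x) = n.factorial / Real.pi ^ n * ((1 - x ^ 2)⁻¹) ^ (n + 1) := by
  simp [Kr, curve, apply_ite (fun z : ℂ => ‖z‖ ^ 2)]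

lemma Kr_curve_rpow (hn : 0 < n) {x : ℝ} (hx : x ^ 2 ≤ 1) :
    Kr (curve n hn x) ^ ((n : ℝ) + 1)⁻¹ =
      (n.factorial / Real.pi ^ n) ^ ((n : ℝ) + 1)⁻¹ * (1 - x ^ 2)⁻¹ := by
  have hv : 0 ≤ (1 - x ^ 2)⁻¹ := inv_nonneg.mpr (by linarith)
  rw [Kr_curve, Real.mul_rpow (by positivity) (by positivity), ← Real.rpow_natCast _ (n + 1),
    ← Real.rpow_mul hv, Nat.cast_add_one, mul_inv_cancel₀ (by positivity), Real.rpow_one]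

variable {G : DiscreteGroup n}

namespace HypElt

variable (H : HypElt n G)

lemma lam_ne_zero : H.lam ≠ 0 := by
  intro h
  have := H.lam_sq
  rw [h] at this
  norm_num at this

lemma lam_sq_ne_one : H.lam ^ 2 ≠ 1 := H.lam_sq.ne'

lemma herm_invariant (u v : Fin (n + 1) → ℂ) : herm (H.γ *ᵥ u) (H.γ *ᵥ v) = herm u v :=
  (G.sub_SU H.mem).2 u v

lemma X_ne_Y : H.X ≠ H.Y := by
  intro h
  have hlast := congrFun (H.eigX.symm.trans (h ▸ H.eigY)) (Fin.last n)
  simp only [Pi.smul_apply, smul_eq_mul, snoc1, Fin.snoc_last, mul_one] at hlast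
  have hne : (H.lam : ℂ) ≠ 0 := by exact_mod_cast H.lam_ne_zero
  have h2 : (H.lam : ℂ) ^ 2 = 1 := by
    rw [sq]
    nth_rewrite 2 [hlast]
    exact mul_inv_cancel₀ hne
  exact H.lam_sq_ne_one (by exact_mod_cast h2)

lemma pair_X_Y_eq : pair H.X H.Y = ((∑ i, (H.X i).re * (H.Y i).re - 1 : ℝ) : ℂ) :=
  pair_eq_ofReal_of_im_eq_zero H.X_real H.Y_real

lemma pair_X_Y_ne_zero : pair H.X H.Y ≠ 0 := by
  rw [pair_X_Y_eq, Complex.ofReal_ne_zero, sub_ne_zero]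
  exact sum_re_mul_re_ne_one H.X_bd H.Y_bd H.X_real H.Y_real H.X_ne_Y

lemma star_pair_X_Y : star (pair H.X H.Y) = pair H.X H.Y := by
  rw [pair_X_Y_eq, Complex.star_def, Complex.conj_ofReal]

lemma herm_v_snoc1_X (j : Fin (n - 1)) : herm (H.v j) (snoc1 H.X) = 0 :=
  herm_eq_zero_of_mulVec_eq_smul H.herm_invariant (H.v_eig j) H.eigX
    (mul_star_ofReal_ne_one (H.alph_pm j) H.lam_sq_ne_one)

lemma herm_v_snoc1_Y (j : Fin (n - 1)) : herm (H.v j) (snoc1 H.Y) = 0 := by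
  refine herm_eq_zero_of_mulVec_eq_smul H.herm_invariant (H.v_eig j) H.eigY ?_
  rw [← Complex.ofReal_inv]
  exact mul_star_ofReal_ne_one (H.alph_pm j) (by rw [inv_pow]; simpa using H.lam_sq_ne_one)

def colXY (t : ℂ) : Fin (n + 1) → ℂ := (pair H.X H.Y)⁻¹ • snoc1 H.X + t • snoc1 H.Y

lemma herm_v_colXY (j : Fin (n - 1)) (t : ℂ) : herm (H.v j) (H.colXY t) = 0 := by
  simp [colXY, herm_add_right, herm_smul_right, herm_v_snoc1_X, herm_v_snoc1_Y]

lemma herm_colXY_v (j : Fin (n - 1)) (t : ℂ) : herm (H.colXY t) (H.v j) = 0 := by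
  rw [← star_herm, herm_v_colXY, star_zero]

lemma herm_colXY_colXY (t t' : ℂ) : herm (H.colXY t) (H.colXY t') = star t' + t := by
  have hP := H.pair_X_Y_ne_zero
  have hYX : herm (snoc1 H.Y) (snoc1 H.X) = pair H.X H.Y := by
    rw [← star_herm, herm_snoc1, star_pair_X_Y]
  simp only [colXY, herm_add_left, herm_add_right, herm_smul_left, herm_smul_right, hYX,
    herm_snoc1, pair_self_eq_zero H.X_bd, pair_self_eq_zero H.Y_bd, star_inv₀, star_pair_X_Y]
  field_simp
  ring

lemma col_A_of_lt {j : Fin (n + 1)} (hj : (j : ℕ) < n - 1) : H.A.col j = H.v ⟨j, hj⟩ := by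
  funext i
  simp [A, Amat, hj]

lemma col_A_of_not_lt (hn : 0 < n) {j : Fin (n + 1)} (hj : ¬ (j : ℕ) < n - 1) :
    H.A.col j = H.colXY (if j = Fin.last n then -2⁻¹ else 2⁻¹) := by
  funext i
  by_cases hjl : j = Fin.last n
  · have : n ≠ n - 1 := by omega
    simp [hjl, A, Amat, colXY, this, sub_eq_add_neg]
  · have : (j : ℕ) = n - 1 := by
      have := Fin.val_ne_of_ne hjl
      simp only [Fin.val_last] at this
      omega
    simp [hjl, A, Amat, colXY, this]

lemma herm_col_A (hn : 0 < n) (j l : Fin (n + 1)) :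
    herm (H.A.col j) (H.A.col l) = sigmaM n l j := by
  have hσ : sigmaM n l j = if l = j then (if j = Fin.last n then -1 else 1) else 0 := by
    rw [sigmaM, Matrix.diagonal_apply]
    split_ifs <;> simp_all
  by_cases hj : (j : ℕ) < n - 1 <;> by_cases hl : (l : ℕ) < n - 1
  · have hjl : (⟨j, hj⟩ : Fin (n - 1)) = ⟨l, hl⟩ ↔ l = j := by simp [Fin.ext_iff, eq_comm]
    have hjlast : j ≠ Fin.last n := Fin.ne_of_val_ne (by simp only [Fin.val_last]; omega)
    simp only [col_A_of_lt H hj, col_A_of_lt H hl, v_on, hσ, hjl, hjlast, if_false]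
  · have hlj : l ≠ j := fun h => hl (h ▸ hj)
    rw [col_A_of_lt H hj, col_A_of_not_lt H hn hl, herm_v_colXY, hσ, if_neg hlj]
  · have hlj : l ≠ j := fun h => hj (h ▸ hl)
    rw [col_A_of_not_lt H hn hj, col_A_of_lt H hl, herm_colXY_v, hσ, if_neg hlj]
  · have hpidx : j ≠ Fin.last n → l ≠ Fin.last n → l = j := fun hj' hl' => by
      have := Fin.val_ne_of_ne hj'
      have := Fin.val_ne_of_ne hl'
      simp only [Fin.val_last] at *
      omega
    rw [col_A_of_not_lt H hn hj, col_A_of_not_lt H hn hl, herm_colXY_colXY, hσ]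
    split_ifs <;> simp_all <;> norm_num

lemma det_A_ne_zero (hn : 0 < n) : H.A.det ≠ 0 :=
  det_ne_zero_of_herm_col (H.herm_col_A hn)

variable (hn : 0 < n)

def halfSum : ℝ := (H.lam + H.lam⁻¹) / 2

def halfDiff : ℝ := (H.lam - H.lam⁻¹) / 2

lemma halfSum_sq_sub_halfDiff_sq : H.halfSum ^ 2 - H.halfDiff ^ 2 = 1 := by
  have := H.lam_ne_zero
  rw [halfSum, halfDiff]
  field_simp
  ring

lemma A_mulVec_snoc_curve (u w : ℝ) :
    H.A *ᵥ Fin.snoc (curve n hn u) (w : ℂ) =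
      (((u + w : ℝ) : ℂ) * (pair H.X H.Y)⁻¹) • snoc1 H.X + (((u - w) / 2 : ℝ) : ℂ) • snoc1 H.Y := by
  have hp : ¬ ((lastI n hn).castSucc : ℕ) < n - 1 := by simp [lastI]
  have hl : ¬ ((Fin.last n : Fin (n + 1)) : ℕ) < n - 1 := by simp
  rw [mulVec_snoc_curve, H.col_A_of_not_lt hn hp, H.col_A_of_not_lt hn hl, if_pos rfl,
    if_neg (Fin.castSucc_lt_last _).ne, colXY, colXY]
  push_cast
  module

lemma g0_mulVec_snoc_curve (u w : ℝ) :
    H.g0 *ᵥ Fin.snoc (curve n hn u) (w : ℂ) =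
      Fin.snoc (curve n hn (H.halfSum * u + H.halfDiff * w))
        ((H.halfDiff * u + H.halfSum * w : ℝ) : ℂ) := by
  have hγ : H.γ *ᵥ (H.A *ᵥ Fin.snoc (curve n hn u) (w : ℂ)) =
      H.A *ᵥ Fin.snoc (curve n hn (H.halfSum * u + H.halfDiff * w))
        ((H.halfDiff * u + H.halfSum * w : ℝ) : ℂ) := by
    have : (H.lam : ℂ) ≠ 0 := by exact_mod_cast H.lam_ne_zero
    rw [H.A_mulVec_snoc_curve, H.A_mulVec_snoc_curve, Matrix.mulVec_add, Matrix.mulVec_smul,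
      Matrix.mulVec_smul, H.eigX, H.eigY, smul_smul, smul_smul, halfSum, halfDiff]
    congr 2 <;> push_cast <;> field_simp <;> ring
  have hA : H.A⁻¹ * H.A = 1 := Matrix.nonsing_inv_mul _ (isUnit_iff_ne_zero.mpr (H.det_A_ne_zero hn))
  rw [g0, ← Matrix.mulVec_mulVec, ← Matrix.mulVec_mulVec, hγ, Matrix.mulVec_mulVec, hA,
    Matrix.one_mulVec]

lemma act_g0_curve (x : ℝ) :
    act H.g0 (curve n hn x) = curve n hn (boost H.halfSum H.halfDiff x) := by
  have h := H.g0_mulVec_snoc_curve hn x 1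
  rw [Complex.ofReal_one, mul_one, mul_one] at h
  exact act_eq_curve_of_mulVec_snoc1 hn h

end HypElt

end

end BallPaper

open BallPaper in
/-- the 1-form φ(z) = K(z,z)^{1/(n+1)} dzₙ restricted to C̃₀ is
γ₀-invariant: K(γ₀z,γ₀z)^{1/(n+1)} · d/dx (n-th coordinate of γ₀ applied to (0,…,0,x))
equals K(z,z)^{1/(n+1)} at z = (0,…,0,x). -/
theorem phi_g0_invariant (n : ℕ) (hn : 0 < n) (G : BallPaper.DiscreteGroup n)
    (H : BallPaper.HypElt n G) :
    ∀ x : ℝ, -1 < x → x < 1 →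
      Kr (act H.g0 (curve n hn x)) ^ (((n : ℝ) + 1))⁻¹ *
        deriv (fun t : ℝ => (act H.g0 (curve n hn t) (lastI n hn)).re) x =
      Kr (curve n hn x) ^ (((n : ℝ) + 1))⁻¹ := by
  intro x hx₁ hx₂
  have hx : x ^ 2 < 1 := by nlinarith
  have hab := H.halfSum_sq_sub_halfDiff_sq
  have hden := boost_denom_ne_zero hab hx
  have hcoord : (fun t : ℝ => (act H.g0 (curve n hn t) (lastI n hn)).re) =
      boost H.halfSum H.halfDiff :=
    funext fun t => by simp [H.act_g0_curve hn, curve]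
  have hy_le : boost H.halfSum H.halfDiff x ^ 2 ≤ 1 := by
    have : 0 ≤ (1 - x ^ 2) / (H.halfDiff * x + H.halfSum) ^ 2 :=
      div_nonneg (by linarith) (sq_nonneg _)
    linarith [one_sub_boost_sq hab hden]
  rw [hcoord, (hasDerivAt_boost hab hden).deriv, H.act_g0_curve hn, Kr_curve_rpow hn hy_le,
    Kr_curve_rpow hn hx.le, mul_assoc, inv_one_sub_boost_sq_mul hab hden]
end

section
/- Fix a real number u with −1 < u < 1. As the integer m → ∞ (m ≥ 3), the integral ∫_{−1}^{1} (1−x²)^{m/2 − 1}·(1−xu)^{−m} dx is asymptotic to √(2π/(m−2))·(1−u²)^{−m/2}, i.e., the ratio of the two sides tends to 1. -/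
open scoped BigOperators
open Complex MeasureTheory Filter Topology Matrix

/-!
The substitution `x = (cos θ + u) / (1 + u cos θ)` maps `[0, π]` onto `[-1, 1]` and turns the
integral exactly into `(1 - u²)^(-m/2) ∫₀^π sin^(m-1) θ dθ`. The Wallis integrals
`Iₙ = ∫₀^π sinⁿ` decrease in `n` and satisfy `Iₙ Iₙ₊₁ = 2π/(n+1)`, so
`2π/(n+2) ≤ Iₙ₊₁² ≤ 2π/(n+1)`, whence `Iₙ₊₁ ~ √(2π/n)`.
-/

open Real intervalIntegral

theorem integral_sin_pow_mul_integral_sin_pow_succ (n : ℕ) :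
    (∫ x in 0..π, Real.sin x ^ n) * (∫ x in 0..π, Real.sin x ^ (n + 1)) =
      2 * π / (n + 1) := by
  induction n with
  | zero => norm_num [mul_comm]
  | succ n ih =>
    rw [integral_sin_pow]
    simp only [Real.sin_zero, Real.sin_pi, zero_pow n.succ_ne_zero, zero_mul, sub_zero, zero_div,
      zero_add]
    rw [mul_left_comm, ← mul_comm (∫ x in 0..π, Real.sin x ^ n), ih]
    push_cast
    field_simp
    ring

theorem tendsto_integral_sin_pow_succ_div_sqrt :
    Tendsto (fun n : ℕ => (∫ x in 0..π, Real.sin x ^ (n + 1)) / √(2 * π / n))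
      atTop (𝓝 1) := by
  set I : ℕ → ℝ := fun k => ∫ x in 0..π, Real.sin x ^ k
  have hsq : ∀ n : ℕ, 0 < n →
      (I (n + 1) / √(2 * π / n)) ^ 2 = I (n + 1) ^ 2 / (2 * π / n) := by
    intro n hn
    rw [div_pow, sq_sqrt (by positivity)]
  have lower : ∀ᶠ n : ℕ in atTop,
      (n : ℝ) / (n + 2) ≤ (I (n + 1) / √(2 * π / n)) ^ 2 := by
    filter_upwards [eventually_gt_atTop 0] with n hn
    have h := integral_sin_pow_mul_integral_sin_pow_succ (n + 1)
    have hle : I (n + 2) ≤ I (n + 1) := integral_sin_pow_succ_le _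
    have hI : 2 * π / (n + 2) ≤ I (n + 1) ^ 2 := by
      push_cast at h
      rw [show (n : ℝ) + 1 + 1 = n + 2 by ring] at h
      rw [← h, sq]
      exact mul_le_mul_of_nonneg_left hle (integral_sin_pow_pos _).le
    rw [hsq n hn]
    calc (n : ℝ) / (n + 2) = (2 * π / (n + 2)) / (2 * π / n) := by field_simp
      _ ≤ _ := by gcongr
  have upper : ∀ᶠ n : ℕ in atTop,
      (I (n + 1) / √(2 * π / n)) ^ 2 ≤ (n : ℝ) / (n + 1) := by
    filter_upwards [eventually_gt_atTop 0] with n hn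
    have h := integral_sin_pow_mul_integral_sin_pow_succ n
    have hle : I (n + 1) ≤ I n := integral_sin_pow_succ_le _
    have hI : I (n + 1) ^ 2 ≤ 2 * π / (n + 1) := by
      rw [← h, sq]
      exact mul_le_mul_of_nonneg_right hle (integral_sin_pow_pos _).le
    rw [hsq n hn]
    calc _ ≤ (2 * π / (n + 1)) / (2 * π / n) := by gcongr
      _ = (n : ℝ) / (n + 1) := by field_simp
  have hsq_lim := tendsto_of_tendsto_of_tendsto_of_le_of_le'
    (tendsto_natCast_div_add_atTop 2) (tendsto_natCast_div_add_atTop 1) lower upper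
  refine (Real.sqrt_one ▸ hsq_lim.sqrt).congr fun n => sqrt_sq ?_
  exact div_nonneg (integral_sin_pow_pos _).le (sqrt_nonneg _)

section MobiusCos

variable {u : ℝ}

noncomputable def mobiusCos (u θ : ℝ) : ℝ := (Real.cos θ + u) / (1 + Real.cos θ * u)

theorem one_add_mul_cos_pos (hu : |u| < 1) (θ : ℝ) : 0 < 1 + Real.cos θ * u := by
  have h : |Real.cos θ * u| < 1 := by
    rw [abs_mul]
    exact (mul_le_of_le_one_left (abs_nonneg u) (abs_cos_le_one θ)).trans_lt hu
  linarith [neg_abs_le (Real.cos θ * u)]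

theorem mobiusCos_mem_Icc (hu : |u| < 1) (θ : ℝ) : mobiusCos u θ ∈ Set.Icc (-1) 1 := by
  have hD := one_add_mul_cos_pos hu θ
  obtain ⟨hu1, hu2⟩ := abs_lt.mp hu
  have hc1 := neg_one_le_cos θ
  have hc2 := cos_le_one θ
  constructor
  · rw [mobiusCos, le_div_iff₀ hD]
    nlinarith
  · rw [mobiusCos, div_le_one hD]
    nlinarith

theorem one_sub_mobiusCos_sq (hu : |u| < 1) (θ : ℝ) :
    1 - mobiusCos u θ ^ 2 = (1 - u ^ 2) * Real.sin θ ^ 2 / (1 + Real.cos θ * u) ^ 2 := by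
  have hD := (one_add_mul_cos_pos hu θ).ne'
  rw [mobiusCos, Real.sin_sq]
  field_simp
  ring

theorem one_sub_mobiusCos_mul (hu : |u| < 1) (θ : ℝ) :
    1 - mobiusCos u θ * u = (1 - u ^ 2) / (1 + Real.cos θ * u) := by
  have hD := (one_add_mul_cos_pos hu θ).ne'
  rw [mobiusCos]
  field_simp
  ring

theorem hasDerivAt_mobiusCos (hu : |u| < 1) (θ : ℝ) :
    HasDerivAt (mobiusCos u) (-(1 - u ^ 2) * Real.sin θ / (1 + Real.cos θ * u) ^ 2) θ := by
  have hD := (one_add_mul_cos_pos hu θ).ne'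
  refine (((Real.hasDerivAt_cos θ).add_const u).div
    (((Real.hasDerivAt_cos θ).mul_const u).const_add 1) hD).congr_deriv ?_
  field_simp
  ring

theorem integrand_mobiusCos_mul_deriv (hu : |u| < 1) {m : ℕ} (hm : 2 ≤ m) {θ : ℝ}
    (hθ : 0 ≤ Real.sin θ) :
    (1 - mobiusCos u θ ^ 2) ^ ((m : ℝ) / 2 - 1) * (1 - mobiusCos u θ * u) ^ (-(m : ℝ)) *
        (-(1 - u ^ 2) * Real.sin θ / (1 + Real.cos θ * u) ^ 2) =
      -((1 - u ^ 2) ^ (-(m : ℝ) / 2) * Real.sin θ ^ (m - 1)) := by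
  obtain ⟨k, rfl⟩ : ∃ k, m = k + 2 := ⟨m - 2, by omega⟩
  have hB : 0 < 1 - u ^ 2 := by nlinarith [abs_lt.mp hu]
  set r := √(1 - u ^ 2)
  set D := 1 + Real.cos θ * u
  have hr : 0 < r := sqrt_pos.mpr hB
  have hr2 : r ^ 2 = 1 - u ^ 2 := sq_sqrt hB.le
  have hD : 0 < D := one_add_mul_cos_pos hu θ
  have hbase :
      (1 - mobiusCos u θ ^ 2) ^ (((k + 2 : ℕ) : ℝ) / 2 - 1) = (r * Real.sin θ / D) ^ k := by
    rw [one_sub_mobiusCos_sq hu, ← hr2, ← mul_pow, ← div_pow,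
      show ((k + 2 : ℕ) : ℝ) / 2 - 1 = (k : ℝ) / 2 by push_cast; ring,
      rpow_div_two_eq_sqrt _ (sq_nonneg _), sqrt_sq (by positivity), rpow_natCast]
  have hfactor :
      (1 - mobiusCos u θ * u) ^ (-((k + 2 : ℕ) : ℝ)) = ((r ^ 2 / D) ^ (k + 2))⁻¹ := by
    rw [one_sub_mobiusCos_mul hu, ← hr2, rpow_neg (by positivity), rpow_natCast]
  have hconst : (1 - u ^ 2) ^ (-((k + 2 : ℕ) : ℝ) / 2) = (r ^ (k + 2))⁻¹ := by
    rw [neg_div, rpow_neg hB.le, rpow_div_two_eq_sqrt _ hB.le, rpow_natCast]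
  rw [hbase, hfactor, hconst, ← hr2, show k + 2 - 1 = k + 1 by rfl]
  clear_value r D
  simp only [div_pow, mul_pow]
  field_simp
  ring

theorem integral_one_sub_sq_rpow_mul_one_sub_mul_rpow (hu : |u| < 1) {m : ℕ} (hm : 2 ≤ m) :
    ∫ x in (-1 : ℝ)..1, (1 - x ^ 2) ^ ((m : ℝ) / 2 - 1) * (1 - x * u) ^ (-(m : ℝ)) =
      (1 - u ^ 2) ^ (-(m : ℝ) / 2) * ∫ θ in 0..π, Real.sin θ ^ (m - 1) := by
  set g : ℝ → ℝ := fun x => (1 - x ^ 2) ^ ((m : ℝ) / 2 - 1) * (1 - x * u) ^ (-(m : ℝ))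
  have hm' : (2 : ℝ) ≤ m := by exact_mod_cast hm
  have hg : ContinuousOn g (Set.Icc (-1) 1) := by
    refine ContinuousOn.mul
      ((Continuous.rpow_const (by fun_prop) fun _ => Or.inr (by linarith)).continuousOn)
      (ContinuousOn.rpow_const (by fun_prop) fun x hx => Or.inl ?_)
    have : |x * u| < 1 := by
      rw [abs_mul]
      exact (mul_le_of_le_one_left (abs_nonneg u) (abs_le.mpr hx)).trans_lt hu
    linarith [le_abs_self (x * u)]
  have hD := one_add_mul_cos_pos hu
  set g' : ℝ → ℝ := fun θ => -(1 - u ^ 2) * Real.sin θ / (1 + Real.cos θ * u) ^ 2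
  have hg' : Continuous g' := by fun_prop (disch := exact fun θ => (pow_pos (hD θ) 2).ne')
  have hsubst := integral_comp_mul_deriv' (a := 0) (b := π) (g := g)
    (fun θ _ => hasDerivAt_mobiusCos hu θ) hg'.continuousOn
    (hg.mono (Set.image_subset_iff.2 fun θ _ => mobiusCos_mem_Icc hu θ))
  have h0 : mobiusCos u 0 = 1 := by
    rw [mobiusCos, div_eq_one_iff_eq (hD 0).ne', Real.cos_zero, one_mul, add_comm]
  have hπ : mobiusCos u π = -1 := by
    rw [mobiusCos, div_eq_iff (hD π).ne', Real.cos_pi]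
    ring
  rw [h0, hπ] at hsubst
  calc ∫ x in (-1 : ℝ)..1, g x
      = ∫ θ in 0..π, -((g ∘ mobiusCos u) θ * g' θ) := by
        rw [intervalIntegral.integral_neg, hsubst, integral_symm]
    _ = ∫ θ in 0..π, (1 - u ^ 2) ^ (-(m : ℝ) / 2) * Real.sin θ ^ (m - 1) := by
        refine integral_congr fun θ hθ => ?_
        rw [Set.uIcc_of_le pi_pos.le] at hθ
        simp only [Function.comp, g, g',
          integrand_mobiusCos_mul_deriv hu hm (sin_nonneg_of_mem_Icc hθ), neg_neg]
    _ = _ := intervalIntegral.integral_const_mul _ _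

end MobiusCos

open Filter Topology in
/-- for fixed u ∈ (−1,1), as m → ∞,
∫_{−1}^1 (1−x²)^{m/2−1} (1−xu)^{−m} dx ~ √(2π/(m−2)) (1−u²)^{−m/2}. -/
theorem laplace_asymptotics (u : ℝ) (hu1 : -1 < u) (hu2 : u < 1) :
    Tendsto (fun m : ℕ =>
      (∫ x in (-1 : ℝ)..1, (1 - x ^ 2) ^ ((m : ℝ) / 2 - 1) * (1 - x * u) ^ (-(m : ℝ))) /
        (Real.sqrt (2 * Real.pi / ((m : ℝ) - 2)) * (1 - u ^ 2) ^ (-(m : ℝ) / 2)))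
      atTop (𝓝 1) := by
  have hu : |u| < 1 := abs_lt.mpr ⟨hu1, hu2⟩
  have hB : 0 < 1 - u ^ 2 := by nlinarith
  refine (tendsto_integral_sin_pow_succ_div_sqrt.comp (tendsto_sub_atTop_nat 2)).congr' ?_
  filter_upwards [eventually_ge_atTop 2] with m hm
  rw [Function.comp_apply, integral_one_sub_sq_rpow_mul_one_sub_mul_rpow hu hm,
    mul_comm ((1 - u ^ 2) ^ (-(m : ℝ) / 2)),
    mul_div_mul_right _ _ (rpow_pos_of_pos hB _).ne', Nat.cast_sub hm,
    show m - 2 + 1 = m - 1 by omega, Nat.cast_ofNat]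
end
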